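/- Let C be a small category and U a subterminal presheaf on C. For a presheaf X, write O(X) = X^U for its U-modal reflection (with unit the canonical map X ⟶ X^U) and write Cl(X) for its U-connected reflection, the pushout of X ⟵ X × U ⟶ U (with unit the coprojection X ⟶ Cl(X)). Then for every presheaf X, the commuting square with vertices X, Cl(X), O(X), Cl(O(X)) — whose sides are the unit X ⟶ Cl(X), the unit X ⟶ O(X), the unit O(X) ⟶ Cl(O(X)), and Cl applied to the unit X ⟶ O(X), i.e., Cl(X) ⟶ Cl(O(X)) — is a pullback square. -/

import Mathlib

open CategoryTheory CategoryTheory.Limits MonoidalCategory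

universe u

variable {C : Type u} [SmallCategory C]

/-- The `U`-modal reflection `O(X) = X^U`. -/
noncomputable def modalReflection (U X : Cᵒᵖ ⥤ Type u) : Cᵒᵖ ⥤ Type u :=
  (ihom U).obj X

/-- The unit `X ⟶ O(X) = X^U`: the currying of the (first) projection
`X × U ⟶ X`. -/
noncomputable def modalUnit (U X : Cᵒᵖ ⥤ Type u) : X ⟶ modalReflection U X :=
  MonoidalClosed.curry (CartesianMonoidalCategory.snd U X)

/-- The `U`-connected reflection functor `Cl : Psh(C) ⥤ Psh(C)`, sending a presheaf
`X` to the pushout of the span `X ⟵ X × U ⟶ U` formed by the two product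
projections, and acting on morphisms by functoriality of pushouts. -/
noncomputable def connReflectionFunctor (U : Cᵒᵖ ⥤ Type u) :
    (Cᵒᵖ ⥤ Type u) ⥤ Cᵒᵖ ⥤ Type u where
  obj X := pushout (CartesianMonoidalCategory.fst X U) (CartesianMonoidalCategory.snd X U)
  map {X Y} f :=
    pushout.map _ _ _ _ f (𝟙 U) (f ⊗ₘ 𝟙 U) (by simp) (by simp)
  map_id X := by
    apply pushout.hom_ext <;> simp
  map_comp {X Y Z} f g := by
    rw [pushout.map_comp]
    congr 1

/-- The unit `X ⟶ Cl(X)` of the `U`-connected reflection: the coprojection into the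
pushout. -/
noncomputable def connUnit (U X : Cᵒᵖ ⥤ Type u) :
    X ⟶ (connReflectionFunctor U).obj X :=
  pushout.inl (CartesianMonoidalCategory.fst X U) (CartesianMonoidalCategory.snd X U)

/-!
Pullbacks of presheaves are computed objectwise, and since `U` is subterminal each `U c` is
empty or a singleton. If `U c` is empty, `X c × U c → U c` is a bijection, hence so is its
pushout `X c → Cl(X) c`: both units into `Cl` are invertible at `c`. If `U c` is a singleton,
`X c × U c → X c` is a bijection, hence so is the coprojection `U c → Cl(Y) c` for every `Y`,
which makes `Cl(f)` invertible at `c` for every `f`; and `X c → X^U c` is a bijection by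
Yoneda, because `yoneda c × U ≅ yoneda c`. A square with two parallel sides invertible is a
pullback.
-/

open CartesianMonoidalCategory

section Cartesian

variable {𝒞 : Type*} [Category 𝒞] [CartesianMonoidalCategory 𝒞]

lemma CategoryTheory.IsSubterminal.isIso_snd {U A : 𝒞} (hU : IsSubterminal U) (s : A ⟶ U) :
    IsIso (snd U A) :=
  ⟨lift s (𝟙 A), CartesianMonoidalCategory.hom_ext _ _ (hU _ _) (by simp), by simp⟩

lemma CategoryTheory.IsSubterminal.bijective_comp_curry_snd [MonoidalClosed 𝒞] {U A : 𝒞}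
    (hU : IsSubterminal U) (s : A ⟶ U) (X : 𝒞) :
    Function.Bijective fun f : A ⟶ X => f ≫ MonoidalClosed.curry (snd U X) := by
  have := hU.isIso_snd s
  have hcomp : (fun f : A ⟶ X => f ≫ MonoidalClosed.curry (snd U X)) =
      MonoidalClosed.curry ∘ fun f => snd U A ≫ f := by
    funext f
    rw [← MonoidalClosed.curry_natural_left, whiskerLeft_snd]
    rfl
  rw [hcomp]
  exact ((ihom.adjunction U).homEquiv _ _).bijective.comp
    ((asIso (snd U A)).symm.homFromEquiv (Z := X)).bijective

end Cartesian

lemma isPullback_of_isPullback_app {K D : Type*} [Category K] [Category D] {P X Y Z : K ⥤ D}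
    {fst : P ⟶ X} {snd : P ⟶ Y} {f : X ⟶ Z} {g : Y ⟶ Z} (w : fst ≫ f = snd ≫ g)
    (h : ∀ c, IsPullback (fst.app c) (snd.app c) (f.app c) (g.app c)) :
    IsPullback fst snd f g :=
  IsPullback.of_isLimit (c := PullbackCone.mk fst snd w) <|
    evaluationJointlyReflectsLimits _ fun c =>
      (isLimitMapConePullbackConeEquiv ((evaluation K D).obj c) w).symm (h c).isLimit

lemma isPushout_connUnit_app (U Y : Cᵒᵖ ⥤ Type u) (c : Cᵒᵖ) :
    IsPushout ((fst Y U).app c) ((snd Y U).app c)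
      ((connUnit U Y).app c) ((pushout.inr (fst Y U) (snd Y U)).app c) :=
  (IsPushout.of_hasPushout (fst Y U) (snd Y U)).map ((evaluation Cᵒᵖ (Type u)).obj c)

section Presheaf

lemma CategoryTheory.IsSubterminal.subsingleton_obj {U : Cᵒᵖ ⥤ Type u} (hU : IsSubterminal U)
    (c : Cᵒᵖ) : Subsingleton (U.obj c) :=
  ⟨fun u u' => yonedaEquiv.symm.injective (hU (yonedaEquiv.symm u) (yonedaEquiv.symm u'))⟩

variable {U : Cᵒᵖ ⥤ Type u} {c : Cᵒᵖ}

lemma modalUnit_app_bijective (hU : IsSubterminal U) (u : U.obj c) (X : Cᵒᵖ ⥤ Type u) :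
    Function.Bijective ((modalUnit U X).app c) := by
  have hcomp : ⇑((modalUnit U X).app c) =
      yonedaEquiv ∘ (fun f => f ≫ modalUnit U X) ∘ yonedaEquiv.symm := by
    funext x
    rw [Function.comp_apply, Function.comp_apply, yonedaEquiv_comp, Equiv.apply_symm_apply]
  rw [hcomp]
  exact yonedaEquiv.bijective.comp
    ((hU.bijective_comp_curry_snd (yonedaEquiv.symm u) X).comp yonedaEquiv.symm.bijective)

lemma isIso_connUnit_app_of_isEmpty (h : IsEmpty (U.obj c)) (Y : Cᵒᵖ ⥤ Type u) :
    IsIso ((connUnit U Y).app c) :=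
  have : IsIso ((snd Y U).app c) :=
    (isIso_iff_bijective _).2 ⟨fun p => h.elim p.2, fun u => h.elim u⟩
  (isPushout_connUnit_app U Y c).isIso_inl_of_isIso

lemma isIso_inr_app (hU : IsSubterminal U) (u : U.obj c) (Y : Cᵒᵖ ⥤ Type u) :
    IsIso ((pushout.inr (fst Y U) (snd Y U)).app c) :=
  have := hU.subsingleton_obj c
  have : IsIso ((fst Y U).app c) :=
    (isIso_iff_bijective _).2 ⟨fun p q h => Prod.ext h (Subsingleton.elim _ _),
      fun y => ⟨(y, u), rfl⟩⟩
  (isPushout_connUnit_app U Y c).isIso_inr_of_isIso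

lemma isIso_connReflectionFunctor_map_app (hU : IsSubterminal U) (u : U.obj c)
    {X Y : Cᵒᵖ ⥤ Type u} (f : X ⟶ Y) : IsIso (((connReflectionFunctor U).map f).app c) := by
  have hinr : pushout.inr (fst X U) (snd X U) ≫ (connReflectionFunctor U).map f =
      pushout.inr (fst Y U) (snd Y U) :=
    pushout.inr_desc _ _ _
  exact @IsIso.of_isIso_fac_left _ _ _ _ _ _ _ _ (isIso_inr_app hU u X) (isIso_inr_app hU u Y)
    (NatTrans.congr_app hinr c)

end Presheaf

/-- the recollement / fracture square.  Let `C` be a small category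
and `U` a subterminal presheaf on `C`.  For every presheaf `X`, the commuting square
with vertices `X`, `Cl(X)`, `O(X)`, `Cl(O(X))`, whose sides are the units
`X ⟶ O(X)`, `X ⟶ Cl(X)`, `O(X) ⟶ Cl(O(X))` and `Cl` applied to the unit
`X ⟶ O(X)`, is a pullback square. -/
theorem fracture_square_isPullback (U : Cᵒᵖ ⥤ Type u) (hU : IsSubterminal U)
    (X : Cᵒᵖ ⥤ Type u) :
    IsPullback (modalUnit U X) (connUnit U X)
      (connUnit U (modalReflection U X))
      ((connReflectionFunctor U).map (modalUnit U X)) := by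
  have w : modalUnit U X ≫ connUnit U (modalReflection U X) =
      connUnit U X ≫ (connReflectionFunctor U).map (modalUnit U X) :=
    (pushout.inl_desc _ _ _).symm
  refine isPullback_of_isPullback_app w fun c => ?_
  have w_c := NatTrans.congr_app w c
  rcases isEmpty_or_nonempty (U.obj c) with hc | ⟨⟨u⟩⟩
  · have := isIso_connUnit_app_of_isEmpty hc X
    have := isIso_connUnit_app_of_isEmpty hc (modalReflection U X)
    exact IsPullback.of_vert_isIso ⟨w_c⟩
  · have := (isIso_iff_bijective _).2 (modalUnit_app_bijective hU u X)
    have := isIso_connReflectionFunctor_map_app hU u (modalUnit U X)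
    exact IsPullback.of_horiz_isIso ⟨w_c⟩
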